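/- Let σ₀, q₀, ω₀, σ₁, ω₁ and D be smooth real-valued functions on the open half-plane ℝ²₊; set η₀ = ρ² e^{σ₀} and ω̄₁ = ω₁/η₀². Suppose that on ℝ²₊: (i) ³Δσ₀ = -|∂ω₀|²/η₀²; (ii) the evolution relation ³Δω₁ = e^{2(σ₀+q₀)} D + (4/ρ) ∂_ρ ω₁ + 2 ∂ω₁·∂σ₀ + 2 ∂ω₀·∂σ₁ holds; (iii) there are constants C₂, C₃ > 0 with e^{-2(σ₀+q₀)} |∂ω₀|²/η₀² ≤ C₂ and e^{-2(σ₀+q₀)} |∂σ₀|² ≤ C₃ pointwise. Then there exists a constant C > 0, depending only on C₂ and C₃, such that at every point of ℝ²₊: η₀² e^{-2(σ₀+q₀)} (⁷Δω̄₁)² ≤ 4 (e^{2(σ₀+q₀)}/η₀²) D² + C ( |∂ω₀|² ω̄₁² + |∂σ₁|² + η₀² |∂ω̄₁|² ). -/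

import Mathlib

open MeasureTheory Real

noncomputable section

/-- The open half-plane `{(ρ, z) : ρ > 0}`. -/
def halfPlane : Set (ℝ × ℝ) := {p | 0 < p.1}

/-- Partial derivative with respect to the first variable `ρ`. -/
noncomputable def pdρ (f : ℝ × ℝ → ℝ) (p : ℝ × ℝ) : ℝ := fderiv ℝ f p (1, 0)

/-- Partial derivative with respect to the second variable `z`. -/
noncomputable def pdz (f : ℝ × ℝ → ℝ) (p : ℝ × ℝ) : ℝ := fderiv ℝ f p (0, 1)

/-- `|∂f|² = (∂_ρ f)² + (∂_z f)²`. -/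
noncomputable def gradSq (f : ℝ × ℝ → ℝ) (p : ℝ × ℝ) : ℝ := (pdρ f p) ^ 2 + (pdz f p) ^ 2

/-- `∂f·∂g = ∂_ρ f ∂_ρ g + ∂_z f ∂_z g`. -/
noncomputable def gradDot (f g : ℝ × ℝ → ℝ) (p : ℝ × ℝ) : ℝ :=
  pdρ f p * pdρ g p + pdz f p * pdz g p

/-- Flat 2-dimensional Laplacian `Δf = ∂²_ρ f + ∂²_z f`. -/
noncomputable def lap2 (f : ℝ × ℝ → ℝ) (p : ℝ × ℝ) : ℝ := pdρ (pdρ f) p + pdz (pdz f) p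

/-- `³Δf = Δf + ∂_ρ f / ρ`. -/
noncomputable def lap3 (f : ℝ × ℝ → ℝ) (p : ℝ × ℝ) : ℝ := lap2 f p + pdρ f p / p.1

/-- `⁷Δf = Δf + 5 ∂_ρ f / ρ`. -/
noncomputable def lap7 (f : ℝ × ℝ → ℝ) (p : ℝ × ℝ) : ℝ := lap2 f p + 5 * pdρ f p / p.1

/-- `η₀ = ρ² e^{σ₀}`. -/
noncomputable def eta (σ₀ : ℝ × ℝ → ℝ) : ℝ × ℝ → ℝ := fun p => p.1 ^ 2 * Real.exp (σ₀ p)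

/-- `ω̄₁ = ω₁ / η₀²`. -/
noncomputable def omegaBar (η₀ ω₁ : ℝ × ℝ → ℝ) : ℝ × ℝ → ℝ := fun p => ω₁ p / (η₀ p) ^ 2


section AuxOB

lemma isOpen_halfPlane : IsOpen halfPlane := isOpen_lt continuous_const continuous_fst

lemma pd_mul {f g : ℝ × ℝ → ℝ} {p : ℝ × ℝ} (hf : DifferentiableAt ℝ f p)
    (hg : DifferentiableAt ℝ g p) (v : ℝ × ℝ) :
    fderiv ℝ (fun q => f q * g q) p v = fderiv ℝ f p v * g p + f p * fderiv ℝ g p v := by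
  rw [fderiv_fun_mul hf hg]; simp; ring

lemma pd_add {f g : ℝ × ℝ → ℝ} {p : ℝ × ℝ} (hf : DifferentiableAt ℝ f p)
    (hg : DifferentiableAt ℝ g p) (v : ℝ × ℝ) :
    fderiv ℝ (fun q => f q + g q) p v = fderiv ℝ f p v + fderiv ℝ g p v := by
  rw [fderiv_fun_add hf hg]; simp

lemma pd_exp {f : ℝ × ℝ → ℝ} {p : ℝ × ℝ} (hf : DifferentiableAt ℝ f p) (v : ℝ × ℝ) :
    fderiv ℝ (fun q => Real.exp (f q)) p v = Real.exp (f p) * fderiv ℝ f p v := by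
  rw [fderiv_exp hf]; simp

lemma pd_neg {f : ℝ × ℝ → ℝ} {p : ℝ × ℝ} (v : ℝ × ℝ) :
    fderiv ℝ (fun q => -(f q)) p v = -(fderiv ℝ f p v) := by
  rw [fderiv_fun_neg]; simp

lemma pd_cmul {f : ℝ × ℝ → ℝ} {p : ℝ × ℝ} (hf : DifferentiableAt ℝ f p) (c : ℝ) (v : ℝ × ℝ) :
    fderiv ℝ (fun q => c * f q) p v = c * fderiv ℝ f p v := by
  rw [fderiv_const_mul hf c]; simp

lemma pd_comp_fst {φ : ℝ → ℝ} {a : ℝ} {p : ℝ × ℝ} (h : HasDerivAt φ a p.1) (v : ℝ × ℝ) :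
    fderiv ℝ (fun q : ℝ × ℝ => φ q.1) p v = a * v.1 := by
  have H : HasFDerivAt (fun q : ℝ × ℝ => φ q.1)
      ((ContinuousLinearMap.smulRight (1 : ℝ →L[ℝ] ℝ) a).comp (ContinuousLinearMap.fst ℝ ℝ ℝ)) p :=
    h.hasFDerivAt.comp p hasFDerivAt_fst
  rw [H.fderiv]; simp [mul_comm]

lemma diff_comp_fst {φ : ℝ → ℝ} {a : ℝ} {p : ℝ × ℝ} (h : HasDerivAt φ a p.1) :
    DifferentiableAt ℝ (fun q : ℝ × ℝ => φ q.1) p :=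
  (h.hasFDerivAt.comp p hasFDerivAt_fst).differentiableAt

lemma hasDerivAt_invPow (n : ℕ) {x : ℝ} (hx : x ≠ 0) :
    HasDerivAt (fun x : ℝ => (x ^ n)⁻¹) (-(n * x ^ (n - 1)) / (x ^ n) ^ 2) x :=
  (hasDerivAt_pow n x).inv (pow_ne_zero n hx)

lemma contDiffOn_pd {f : ℝ × ℝ → ℝ} (hf : ContDiffOn ℝ (⊤ : ℕ∞) f halfPlane) (v : ℝ × ℝ) :
    ContDiffOn ℝ (⊤ : ℕ∞) (fun q => fderiv ℝ f q v) halfPlane :=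
  (hf.fderiv_of_isOpen isOpen_halfPlane (by simp)).clm_apply contDiffOn_const

lemma diffAt_of_contDiffOn {f : ℝ × ℝ → ℝ} (hf : ContDiffOn ℝ (⊤ : ℕ∞) f halfPlane)
    {p : ℝ × ℝ} (hp : p ∈ halfPlane) : DifferentiableAt ℝ f p :=
  (hf.contDiffAt (isOpen_halfPlane.mem_nhds hp)).differentiableAt (by simp)

lemma diffAt_pd {f : ℝ × ℝ → ℝ} (hf : ContDiffOn ℝ (⊤ : ℕ∞) f halfPlane) (v : ℝ × ℝ)
    {p : ℝ × ℝ} (hp : p ∈ halfPlane) : DifferentiableAt ℝ (fun q => fderiv ℝ f q v) p :=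
  diffAt_of_contDiffOn (contDiffOn_pd hf v) hp

lemma omegaBar_eq (σ₀ ω₁ : ℝ × ℝ → ℝ) :
    omegaBar (eta σ₀) ω₁ = fun q => ω₁ q * ((q.1 ^ 4)⁻¹ * Real.exp (-(2 * σ₀ q))) := by
  funext q
  simp only [omegaBar, eta, div_eq_mul_inv, mul_pow, ← pow_mul, Real.exp_neg, mul_inv]
  norm_num [two_mul, Real.exp_add, sq]

lemma pd_omegaBar {σ₀ ω₁ : ℝ × ℝ → ℝ} (hσ : ContDiffOn ℝ (⊤ : ℕ∞) σ₀ halfPlane)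
    (hω : ContDiffOn ℝ (⊤ : ℕ∞) ω₁ halfPlane) (v : ℝ × ℝ) {q : ℝ × ℝ} (hq : q ∈ halfPlane) :
    fderiv ℝ (omegaBar (eta σ₀) ω₁) q v
      = fderiv ℝ ω₁ q v * ((q.1 ^ 4)⁻¹ * Real.exp (-(2 * σ₀ q)))
        + ω₁ q * (-(4 * v.1) * ((q.1 ^ 5)⁻¹ * Real.exp (-(2 * σ₀ q)))
            + (q.1 ^ 4)⁻¹ * (Real.exp (-(2 * σ₀ q)) * (-(2 * fderiv ℝ σ₀ q v)))) := by
  have hq1 : q.1 ≠ 0 := ne_of_gt hq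
  have dσ := diffAt_of_contDiffOn hσ hq
  have dω := diffAt_of_contDiffOn hω hq
  have dn : DifferentiableAt ℝ (fun q : ℝ × ℝ => -(2 * σ₀ q)) q := (dσ.const_mul 2).neg
  have dEX : DifferentiableAt ℝ (fun q : ℝ × ℝ => Real.exp (-(2 * σ₀ q))) q := dn.exp
  have dg4 : DifferentiableAt ℝ (fun q : ℝ × ℝ => (q.1 ^ 4)⁻¹) q :=
    diff_comp_fst (hasDerivAt_invPow 4 hq1)
  rw [omegaBar_eq]
  simp only [pd_mul dω (dg4.fun_mul dEX) v, pd_mul dg4 dEX v,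
    pd_comp_fst (hasDerivAt_invPow 4 hq1) v, pd_exp dn v, pd_neg v, pd_cmul dσ 2 v]
  field_simp
  ring

lemma pd2_omegaBar {σ₀ ω₁ : ℝ × ℝ → ℝ} (hσ : ContDiffOn ℝ (⊤ : ℕ∞) σ₀ halfPlane)
    (hω : ContDiffOn ℝ (⊤ : ℕ∞) ω₁ halfPlane) (v : ℝ × ℝ) {p : ℝ × ℝ} (hp : p ∈ halfPlane) :
    fderiv ℝ (fun q => fderiv ℝ (omegaBar (eta σ₀) ω₁) q v) p v
      = (fderiv ℝ (fun q => fderiv ℝ ω₁ q v) p v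
          - 2 * fderiv ℝ ω₁ p v * (4 * v.1 / p.1 + 2 * fderiv ℝ σ₀ p v)
          + ω₁ p * (20 * v.1 ^ 2 / p.1 ^ 2 + 16 * v.1 * fderiv ℝ σ₀ p v / p.1
              + 4 * (fderiv ℝ σ₀ p v) ^ 2 - 2 * fderiv ℝ (fun q => fderiv ℝ σ₀ q v) p v))
        * ((p.1 ^ 4)⁻¹ * Real.exp (-(2 * σ₀ p))) := by
  have hq1 : p.1 ≠ 0 := ne_of_gt hp
  have hEq : (fun q => fderiv ℝ (omegaBar (eta σ₀) ω₁) q v)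
      =ᶠ[nhds p] (fun q => fderiv ℝ ω₁ q v * ((q.1 ^ 4)⁻¹ * Real.exp (-(2 * σ₀ q)))
        + ω₁ q * (-(4 * v.1) * ((q.1 ^ 5)⁻¹ * Real.exp (-(2 * σ₀ q)))
            + (q.1 ^ 4)⁻¹ * (Real.exp (-(2 * σ₀ q)) * (-(2 * fderiv ℝ σ₀ q v))))) :=
    Filter.eventuallyEq_of_mem (isOpen_halfPlane.mem_nhds hp)
      (fun q hq => pd_omegaBar hσ hω v hq)
  rw [hEq.fderiv_eq]
  have dσ := diffAt_of_contDiffOn hσ hp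
  have dω := diffAt_of_contDiffOn hω hp
  have dσ1 := diffAt_pd hσ v hp
  have dω1 := diffAt_pd hω v hp
  have dn : DifferentiableAt ℝ (fun q : ℝ × ℝ => -(2 * σ₀ q)) p := (dσ.const_mul 2).neg
  have dEX : DifferentiableAt ℝ (fun q : ℝ × ℝ => Real.exp (-(2 * σ₀ q))) p := dn.exp
  have dg4 : DifferentiableAt ℝ (fun q : ℝ × ℝ => (q.1 ^ 4)⁻¹) p :=
    diff_comp_fst (hasDerivAt_invPow 4 hq1)
  have dg5 : DifferentiableAt ℝ (fun q : ℝ × ℝ => (q.1 ^ 5)⁻¹) p :=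
    diff_comp_fst (hasDerivAt_invPow 5 hq1)
  have dn1 : DifferentiableAt ℝ (fun q : ℝ × ℝ => -(2 * fderiv ℝ σ₀ q v)) p :=
    (dσ1.const_mul 2).neg
  have dB : DifferentiableAt ℝ (fun q : ℝ × ℝ =>
      -(4 * v.1) * ((q.1 ^ 5)⁻¹ * Real.exp (-(2 * σ₀ q)))
        + (q.1 ^ 4)⁻¹ * (Real.exp (-(2 * σ₀ q)) * (-(2 * fderiv ℝ σ₀ q v)))) p :=
    ((dg5.fun_mul dEX).const_mul _).fun_add (dg4.fun_mul (dEX.fun_mul dn1))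
  simp only [pd_add (dω1.fun_mul (dg4.fun_mul dEX)) (dω.fun_mul dB) v,
    pd_mul dω1 (dg4.fun_mul dEX) v, pd_mul dω dB v,
    pd_add ((dg5.fun_mul dEX).const_mul (-(4 * v.1))) (dg4.fun_mul (dEX.fun_mul dn1)) v,
    pd_cmul (dg5.fun_mul dEX) (-(4 * v.1)) v,
    pd_mul dg5 dEX v, pd_mul dg4 (dEX.fun_mul dn1) v, pd_mul dEX dn1 v,
    pd_mul dg4 dEX v,
    pd_comp_fst (hasDerivAt_invPow 4 hq1) v, pd_comp_fst (hasDerivAt_invPow 5 hq1) v,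
    pd_exp dn v, pd_neg v, pd_cmul dσ 2 v, pd_cmul dσ1 2 v]
  field_simp
  ring

lemma key_identity {σ₀ ω₁ : ℝ × ℝ → ℝ} (hσ : ContDiffOn ℝ (⊤ : ℕ∞) σ₀ halfPlane)
    (hω : ContDiffOn ℝ (⊤ : ℕ∞) ω₁ halfPlane) {p : ℝ × ℝ} (hp : p ∈ halfPlane) :
    lap7 (omegaBar (eta σ₀) ω₁) p
      = (lap3 ω₁ p - 4 / p.1 * pdρ ω₁ p - 2 * gradDot ω₁ σ₀ p) / (eta σ₀ p) ^ 2
        - 2 * lap3 σ₀ p * omegaBar (eta σ₀) ω₁ p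
        - 2 * gradDot σ₀ (omegaBar (eta σ₀) ω₁) p := by
  have hq1 : p.1 ≠ 0 := ne_of_gt hp
  have hρρ := pd2_omegaBar hσ hω (1, 0) hp
  have hzz := pd2_omegaBar hσ hω (0, 1) hp
  have hρ := pd_omegaBar hσ hω (1, 0) hp
  have hz := pd_omegaBar hσ hω (0, 1) hp
  have hsub : Real.exp (-(2 * σ₀ p)) = ((Real.exp (σ₀ p)) ^ 2)⁻¹ := by
    rw [Real.exp_neg, two_mul, Real.exp_add, sq]
  have pdρ_fun : ∀ f : ℝ × ℝ → ℝ, pdρ f = fun q => fderiv ℝ f q (1, 0) := fun _ => rfl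
  have pdz_fun : ∀ f : ℝ × ℝ → ℝ, pdz f = fun q => fderiv ℝ f q (0, 1) := fun _ => rfl
  simp only [lap7, lap2, lap3, pdρ_fun, pdz_fun, pdρ, pdz, gradDot] at *
  rw [hρρ, hzz, hρ, hz]
  simp only [omegaBar, eta]
  rw [hsub]
  have he := Real.exp_ne_zero (σ₀ p)
  field_simp
  ring

lemma gradSq_nonneg (f : ℝ × ℝ → ℝ) (p : ℝ × ℝ) : 0 ≤ gradSq f p := by
  simp only [gradSq]; positivity

lemma gradDot_sq_le (f g : ℝ × ℝ → ℝ) (p : ℝ × ℝ) :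
    (gradDot f g p) ^ 2 ≤ gradSq f p * gradSq g p := by
  simp only [gradDot, gradSq]
  nlinarith [sq_nonneg (pdρ f p * pdz g p - pdz f p * pdρ g p)]

set_option maxHeartbeats 1000000 in
lemma alg_bound (C₂ C₃ η E dd G Q W S S1 S0 SW L : ℝ) (hC₂ : 0 < C₂) (hC₃ : 0 < C₃)
    (hη : 0 < η) (hE : 0 < E) (hQ : 0 ≤ Q) (hS1 : 0 ≤ S1) (hS0 : 0 ≤ S0) (hSW : 0 ≤ SW)
    (hCS1 : G ^ 2 ≤ Q * S1) (hCS2 : S ^ 2 ≤ S0 * SW)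
    (hK : E⁻¹ * (Q / η) ≤ C₂) (hM : E⁻¹ * S0 ≤ C₃)
    (hL : L = (E * dd + 2 * G) / η + 2 * (Q / η) * W - 2 * S) :
    η * E⁻¹ * L ^ 2 ≤ 4 * (E / η) * dd ^ 2 + 16 * (C₂ + C₃) * (Q * W ^ 2 + S1 + η * SW) := by
  have hη' := hη.ne'
  have hE' := hE.ne'
  set a := E * dd / η with ha
  set b := 2 * G / η with hb
  set c := 2 * (Q / η) * W with hc
  set d := -(2 * S) with hd
  have hLd : L = a + b + c + d := by rw [hL, ha, hb, hc, hd]; ring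
  have h1 : L ^ 2 ≤ 4 * (a ^ 2 + b ^ 2 + c ^ 2 + d ^ 2) := by
    rw [hLd]
    nlinarith [sq_nonneg (a - b), sq_nonneg (a - c), sq_nonneg (a - d), sq_nonneg (b - c),
      sq_nonneg (b - d), sq_nonneg (c - d)]
  have h2 : η * E⁻¹ * L ^ 2 ≤ η * E⁻¹ * (4 * (a ^ 2 + b ^ 2 + c ^ 2 + d ^ 2)) :=
    mul_le_mul_of_nonneg_left h1 (by positivity)
  have ea : η * E⁻¹ * (4 * a ^ 2) = 4 * (E / η) * dd ^ 2 := by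
    rw [ha]; field_simp
  have eb : η * E⁻¹ * (4 * b ^ 2) ≤ 16 * C₂ * S1 := by
    have e1 : η * E⁻¹ * (4 * b ^ 2) = 16 * (E⁻¹ * (1 / η)) * G ^ 2 := by
      rw [hb]; field_simp; ring
    have e2 : 16 * (E⁻¹ * (1 / η)) * G ^ 2 ≤ 16 * (E⁻¹ * (1 / η)) * (Q * S1) :=
      mul_le_mul_of_nonneg_left hCS1 (by positivity)
    have e3 : 16 * (E⁻¹ * (1 / η)) * (Q * S1) = (16 * (E⁻¹ * (Q / η))) * S1 := by
      field_simp
    have e4 : (16 * (E⁻¹ * (Q / η))) * S1 ≤ (16 * C₂) * S1 :=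
      mul_le_mul_of_nonneg_right (by linarith) hS1
    linarith [e2, e4, e1.le, e3.le, e1.ge, e3.ge]
  have ec : η * E⁻¹ * (4 * c ^ 2) ≤ 16 * C₂ * (Q * W ^ 2) := by
    have e1 : η * E⁻¹ * (4 * c ^ 2) = (16 * (E⁻¹ * (Q / η))) * (Q * W ^ 2) := by
      rw [hc]; field_simp; ring
    have e4 : (16 * (E⁻¹ * (Q / η))) * (Q * W ^ 2) ≤ (16 * C₂) * (Q * W ^ 2) :=
      mul_le_mul_of_nonneg_right (by linarith) (by positivity)
    linarith [e1.le, e1.ge]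
  have ed : η * E⁻¹ * (4 * d ^ 2) ≤ 16 * C₃ * (η * SW) := by
    have e1 : η * E⁻¹ * (4 * d ^ 2) = (16 * (η * E⁻¹)) * S ^ 2 := by rw [hd]; ring
    have e2 : (16 * (η * E⁻¹)) * S ^ 2 ≤ (16 * (η * E⁻¹)) * (S0 * SW) :=
      mul_le_mul_of_nonneg_left hCS2 (by positivity)
    have e3 : (16 * (η * E⁻¹)) * (S0 * SW) = (16 * (E⁻¹ * S0)) * (η * SW) := by ring
    have e4 : (16 * (E⁻¹ * S0)) * (η * SW) ≤ (16 * C₃) * (η * SW) :=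
      mul_le_mul_of_nonneg_right (by linarith) (by positivity)
    linarith [e1.le, e2, e3.le, e4]
  have hsum : η * E⁻¹ * (4 * (a ^ 2 + b ^ 2 + c ^ 2 + d ^ 2))
      = η * E⁻¹ * (4 * a ^ 2) + η * E⁻¹ * (4 * b ^ 2) + η * E⁻¹ * (4 * c ^ 2)
        + η * E⁻¹ * (4 * d ^ 2) := by ring
  have final2 : 16 * C₂ * S1 + 16 * C₂ * (Q * W ^ 2) + 16 * C₃ * (η * SW)
      ≤ 16 * (C₂ + C₃) * (Q * W ^ 2 + S1 + η * SW) := by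
    nlinarith [mul_nonneg hC₃.le (mul_nonneg hQ (sq_nonneg W)), mul_nonneg hC₃.le hS1,
      mul_nonneg hC₂.le (mul_nonneg hη.le hSW)]
  linarith [h2, hsum.le, hsum.ge, ea.le, ea.ge, eb, ec, ed, final2]

end AuxOB

theorem pointwise_bound_second_derivative_omegaBar
    (C₂ C₃ : ℝ) (hC₂ : 0 < C₂) (hC₃ : 0 < C₃) :
    ∃ C : ℝ, 0 < C ∧
      ∀ σ₀ q₀ ω₀ σ₁ ω₁ D : ℝ × ℝ → ℝ,
        ContDiffOn ℝ (⊤ : ℕ∞) σ₀ halfPlane → ContDiffOn ℝ (⊤ : ℕ∞) q₀ halfPlane →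
        ContDiffOn ℝ (⊤ : ℕ∞) ω₀ halfPlane → ContDiffOn ℝ (⊤ : ℕ∞) σ₁ halfPlane →
        ContDiffOn ℝ (⊤ : ℕ∞) ω₁ halfPlane → ContDiffOn ℝ (⊤ : ℕ∞) D halfPlane →
        (∀ p ∈ halfPlane, lap3 σ₀ p = - (gradSq ω₀ p / (eta σ₀ p) ^ 2)) →
        (∀ p ∈ halfPlane,
          lap3 ω₁ p = Real.exp (2 * (σ₀ p + q₀ p)) * D p + (4 / p.1) * pdρ ω₁ p
            + 2 * gradDot ω₁ σ₀ p + 2 * gradDot ω₀ σ₁ p) →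
        (∀ p ∈ halfPlane,
          Real.exp (-2 * (σ₀ p + q₀ p)) * (gradSq ω₀ p / (eta σ₀ p) ^ 2) ≤ C₂) →
        (∀ p ∈ halfPlane, Real.exp (-2 * (σ₀ p + q₀ p)) * gradSq σ₀ p ≤ C₃) →
        ∀ p ∈ halfPlane,
          (eta σ₀ p) ^ 2 * Real.exp (-2 * (σ₀ p + q₀ p)) *
              (lap7 (omegaBar (eta σ₀) ω₁) p) ^ 2 ≤
            4 * (Real.exp (2 * (σ₀ p + q₀ p)) / (eta σ₀ p) ^ 2) * (D p) ^ 2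
              + C * (gradSq ω₀ p * (omegaBar (eta σ₀) ω₁ p) ^ 2
                + gradSq σ₁ p
                + (eta σ₀ p) ^ 2 * gradSq (omegaBar (eta σ₀) ω₁) p) := by
  refine ⟨16 * (C₂ + C₃), by positivity, ?_⟩
  intro σ₀ q₀ ω₀ σ₁ ω₁ D hσ₀ hq₀ hω₀ hσ₁ hω₁ hD hσeq hωeq hC2p hC3p p hp
  have hp1 : 0 < p.1 := hp
  have hη : 0 < eta σ₀ p := by simp only [eta]; positivity
  have hE : 0 < Real.exp (2 * (σ₀ p + q₀ p)) := Real.exp_pos _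
  have hE'eq : Real.exp (-2 * (σ₀ p + q₀ p)) = (Real.exp (2 * (σ₀ p + q₀ p)))⁻¹ := by
    rw [show (-2 : ℝ) * (σ₀ p + q₀ p) = -(2 * (σ₀ p + q₀ p)) by ring, Real.exp_neg]
  have hL : lap7 (omegaBar (eta σ₀) ω₁) p
      = (Real.exp (2 * (σ₀ p + q₀ p)) * D p + 2 * gradDot ω₀ σ₁ p) / (eta σ₀ p) ^ 2
        + 2 * (gradSq ω₀ p / (eta σ₀ p) ^ 2) * omegaBar (eta σ₀) ω₁ p
        - 2 * gradDot σ₀ (omegaBar (eta σ₀) ω₁) p := by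
    rw [key_identity hσ₀ hω₁ hp, hωeq p hp, hσeq p hp]; ring
  have hK := hC2p p hp
  rw [hE'eq] at hK
  have hM := hC3p p hp
  rw [hE'eq] at hM
  rw [hE'eq]
  exact alg_bound C₂ C₃ ((eta σ₀ p) ^ 2) (Real.exp (2 * (σ₀ p + q₀ p))) (D p)
    (gradDot ω₀ σ₁ p) (gradSq ω₀ p) (omegaBar (eta σ₀) ω₁ p)
    (gradDot σ₀ (omegaBar (eta σ₀) ω₁) p) (gradSq σ₁ p) (gradSq σ₀ p)
    (gradSq (omegaBar (eta σ₀) ω₁) p) (lap7 (omegaBar (eta σ₀) ω₁) p)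
    hC₂ hC₃ (by positivity) hE (gradSq_nonneg ω₀ p) (gradSq_nonneg σ₁ p)
    (gradSq_nonneg σ₀ p) (gradSq_nonneg (omegaBar (eta σ₀) ω₁) p)
    (gradDot_sq_le ω₀ σ₁ p) (gradDot_sq_le σ₀ (omegaBar (eta σ₀) ω₁) p) hK hM hL
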